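/- Let λ₂ > 0 and θ ∈ ℝ be fixed, and let λ₁ > 0 be such that ‖A(λ₁, λ₂, θ)‖ > 1. Then the function s ↦ ‖A(s, λ₂, θ)‖ is differentiable at s = λ₁ and |(∂/∂λ₁)‖A(λ₁,λ₂,θ)‖| · ‖A(λ₁,λ₂,θ)‖^{−1} ≤ 1/λ₁. Symmetrically, for fixed λ₁ > 0 and θ, if λ₂ > 0 is such that ‖A(λ₁, λ₂, θ)‖ > 1, then |(∂/∂λ₂)‖A(λ₁,λ₂,θ)‖| · ‖A(λ₁,λ₂,θ)‖^{−1} ≤ 1/λ₂. -/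

import Mathlib

/-!
For a real `2 × 2` matrix `A`, `‖A‖²` is the larger eigenvalue of `Aᵀ A`. When `det A = 1` it is
the larger root of `x² - t x + 1 = 0`, where `t` is the sum of the squares of the entries, so
`‖A‖ = g t` with `g t = √((t + √(t² - 4)) / 2)` and `g' t / g t = 1 / (2 √(t² - 4))`; the
hypothesis `‖A‖ > 1` says exactly `t > 2`, where `g` is smooth.

Writing `A(s, λ₂, θ) = diag(s, s⁻¹) M` with `det M = 1` gives `t(s) = a s² + b / s²`, where `a`, `b`
are the squared row norms of `M`, so `a b ≥ (det M)² = 1` by Lagrange's identity. Hence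
`(s t'(s))² = 4 (a s² - b / s²)² = 4 (t² - 4 a b) ≤ 4 (t² - 4)`, which is the bound. The bound in
`λ₂` follows from the one in `λ₁` because `A(λ₁, λ₂, θ)ᵀ = A(λ₂, λ₁, -θ)`.
-/

open Real
open scoped Matrix

/-- Operator (Euclidean) norm of a real 2×2 matrix. -/
noncomputable def opNorm (A : Matrix (Fin 2) (Fin 2) ℝ) : ℝ :=
  ‖Matrix.toEuclideanCLM (𝕜 := ℝ) A‖

/-- `A(λ₁, λ₂, θ) = diag(λ₁, λ₁⁻¹) · R_θ · diag(λ₂, λ₂⁻¹)`. -/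
noncomputable def Amat (l1 l2 θ : ℝ) : Matrix (Fin 2) (Fin 2) ℝ :=
  !![l1, 0; 0, l1⁻¹] *
    !![Real.cos θ, -Real.sin θ; Real.sin θ, Real.cos θ] *
    !![l2, 0; 0, l2⁻¹]

/-- The larger eigenvalue of the symmetric matrix `!![p, q; q, r]`. -/
noncomputable def largerEigenvalue (p q r : ℝ) : ℝ := (p + r + √((p - r) ^ 2 + 4 * q ^ 2)) / 2

section largerEigenvalue

variable (p q r : ℝ)

lemma largerEigenvalue_spec :
    p ≤ largerEigenvalue p q r ∧ r ≤ largerEigenvalue p q r ∧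
      (largerEigenvalue p q r - p) * (largerEigenvalue p q r - r) = q ^ 2 := by
  have hsq := sq_sqrt (by positivity : 0 ≤ (p - r) ^ 2 + 4 * q ^ 2)
  have habs := abs_le.mp <|
    abs_le_sqrt (x := p - r) (le_add_of_nonneg_right (by positivity : 0 ≤ 4 * q ^ 2))
  unfold largerEigenvalue
  exact ⟨by linarith, by linarith, by linear_combination hsq / 4⟩

lemma quadForm_le_largerEigenvalue (x y : ℝ) :
    p * x ^ 2 + 2 * q * x * y + r * y ^ 2 ≤ largerEigenvalue p q r * (x ^ 2 + y ^ 2) := by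
  obtain ⟨hp, hr, hpr⟩ := largerEigenvalue_spec p q r
  set μ := largerEigenvalue p q r
  rcases hp.eq_or_lt with hp | hp
  · have hq : q = 0 := by nlinarith
    subst hq
    nlinarith [mul_nonneg (sub_nonneg.mpr hr) (sq_nonneg y)]
  · -- `(μ - p) (μ (x² + y²) - (p x² + 2 q x y + r y²)) = ((μ - p) x - q y)²`
    nlinarith [sq_nonneg ((μ - p) * x - q * y)]

lemma exists_quadForm_eq_largerEigenvalue :
    ∃ x y : ℝ, (x ≠ 0 ∨ y ≠ 0) ∧
      p * x ^ 2 + 2 * q * x * y + r * y ^ 2 = largerEigenvalue p q r * (x ^ 2 + y ^ 2) := by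
  obtain ⟨-, -, hpr⟩ := largerEigenvalue_spec p q r
  set μ := largerEigenvalue p q r
  by_cases h : μ - r = 0 ∧ q = 0
  · exact ⟨0, 1, by simp, by linear_combination -h.1⟩
  · rw [not_and_or] at h
    exact ⟨μ - r, q, h, by linear_combination -(μ - r) * hpr⟩

end largerEigenvalue

lemma ContinuousLinearMap.norm_eq_sqrt_of_norm_sq {E F : Type*} [SeminormedAddCommGroup E]
    [SeminormedAddCommGroup F] [NormedSpace ℝ E] [NormedSpace ℝ F] (f : E →L[ℝ] F) {μ : ℝ}
    (h_le : ∀ x, ‖f x‖ ^ 2 ≤ μ * ‖x‖ ^ 2) (h_eq : ∃ x, ‖x‖ ≠ 0 ∧ ‖f x‖ ^ 2 = μ * ‖x‖ ^ 2) :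
    ‖f‖ = √μ := by
  obtain ⟨x, hx, hfx⟩ := h_eq
  replace hx : 0 < ‖x‖ := (norm_nonneg x).lt_of_ne' hx
  have hμ : 0 ≤ μ := by
    rw [← mul_le_mul_iff_left₀ (pow_pos hx 2), zero_mul, ← hfx]
    positivity
  have hsqrt : ∀ y : E, √(μ * ‖y‖ ^ 2) = √μ * ‖y‖ := fun y => by
    rw [sqrt_mul hμ, sqrt_sq (norm_nonneg y)]
  refine le_antisymm (f.opNorm_le_bound (sqrt_nonneg μ) fun y => ?_) ?_
  · rw [← hsqrt, ← sqrt_sq (norm_nonneg (f y))]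
    exact sqrt_le_sqrt (h_le y)
  · refine le_of_mul_le_mul_right ?_ hx
    rw [← hsqrt, ← hfx, sqrt_sq (norm_nonneg _)]
    exact f.le_opNorm x

lemma norm_toEuclideanCLM_sq (A : Matrix (Fin 2) (Fin 2) ℝ) (x : EuclideanSpace ℝ (Fin 2)) :
    ‖Matrix.toEuclideanCLM (𝕜 := ℝ) A x‖ ^ 2 =
      (A 0 0 ^ 2 + A 1 0 ^ 2) * x 0 ^ 2 + 2 * (A 0 0 * A 0 1 + A 1 0 * A 1 1) * x 0 * x 1 +
        (A 0 1 ^ 2 + A 1 1 ^ 2) * x 1 ^ 2 := by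
  simp only [EuclideanSpace.real_norm_sq_eq, Matrix.ofLp_toEuclideanCLM, Matrix.mulVec, dotProduct,
    Fin.sum_univ_two]
  ring

lemma opNorm_eq_sqrt_largerEigenvalue (A : Matrix (Fin 2) (Fin 2) ℝ) :
    opNorm A = √(largerEigenvalue (A 0 0 ^ 2 + A 1 0 ^ 2) (A 0 0 * A 0 1 + A 1 0 * A 1 1)
      (A 0 1 ^ 2 + A 1 1 ^ 2)) := by
  have norm_sq (x : EuclideanSpace ℝ (Fin 2)) : ‖x‖ ^ 2 = x 0 ^ 2 + x 1 ^ 2 := by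
    simp [EuclideanSpace.real_norm_sq_eq, Fin.sum_univ_two]
  refine ContinuousLinearMap.norm_eq_sqrt_of_norm_sq _ (fun x => ?_) ?_
  · rw [norm_toEuclideanCLM_sq, norm_sq]
    exact quadForm_le_largerEigenvalue ..
  · obtain ⟨x, y, hxy, h⟩ := exists_quadForm_eq_largerEigenvalue
      (A 0 0 ^ 2 + A 1 0 ^ 2) (A 0 0 * A 0 1 + A 1 0 * A 1 1) (A 0 1 ^ 2 + A 1 1 ^ 2)
    refine ⟨!₂[x, y], ?_, ?_⟩
    · rw [← pow_ne_zero_iff two_ne_zero, norm_sq]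
      simp only [Matrix.cons_val_zero, Matrix.cons_val_one]
      rcases hxy with h | h <;> positivity
    · rw [norm_toEuclideanCLM_sq, norm_sq]
      exact h

lemma opNorm_transpose (A : Matrix (Fin 2) (Fin 2) ℝ) : opNorm Aᵀ = opNorm A := by
  open scoped Matrix.Norms.L2Operator in
  simpa [opNorm, ← Matrix.cstar_norm_def] using Matrix.l2_opNorm_conjTranspose A

/-- The operator norm of a determinant-one `2 × 2` matrix whose entries have squared sum `t`. -/
noncomputable def unimodularOpNorm (t : ℝ) : ℝ := √((t + √(t ^ 2 - 4)) / 2)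

lemma two_lt_of_one_lt_unimodularOpNorm {t : ℝ} (h : 1 < unimodularOpNorm t) : 2 < t := by
  by_contra! ht
  have hsqrt : √(t ^ 2 - 4) ≤ 2 - t := by
    rw [← sqrt_sq (by linarith : 0 ≤ 2 - t)]
    exact sqrt_le_sqrt (by nlinarith)
  have : unimodularOpNorm t ≤ 1 := by
    rw [unimodularOpNorm, ← sqrt_one]
    exact sqrt_le_sqrt (by linarith)
  linarith

lemma hasDerivAt_unimodularOpNorm {t : ℝ} (ht : 2 < t) :
    HasDerivAt unimodularOpNorm (unimodularOpNorm t / (2 * √(t ^ 2 - 4))) t := by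
  have hdisc : 0 < t ^ 2 - 4 := by nlinarith
  have hinner : 0 < (t + √(t ^ 2 - 4)) / 2 := by positivity
  have hσ_sq : unimodularOpNorm t ^ 2 = (t + √(t ^ 2 - 4)) / 2 := sq_sqrt hinner.le
  have h_sqrt : HasDerivAt (fun t => √(t ^ 2 - 4)) (t / √(t ^ 2 - 4)) t := by
    convert ((hasDerivAt_pow 2 t).sub_const 4).sqrt hdisc.ne' using 1
    ring
  have h_inner : HasDerivAt (fun t => (t + √(t ^ 2 - 4)) / 2) ((1 + t / √(t ^ 2 - 4)) / 2) t :=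
    ((hasDerivAt_id' t).add h_sqrt).div_const 2
  refine (h_inner.sqrt hinner.ne').congr_deriv ?_
  change _ / (2 * unimodularOpNorm t) = _
  have hσ : unimodularOpNorm t ≠ 0 := (sqrt_pos.mpr hinner).ne'
  -- `t + √(t² - 4) = 2 σ²` turns `(1 + t / √(t² - 4)) / (4 σ)` into `σ / (2 √(t² - 4))`
  field_simp
  linear_combination -2 * hσ_sq

lemma hasDerivAt_mul_sq_add_div_sq (a b : ℝ) {s : ℝ} (hs : s ≠ 0) :
    HasDerivAt (fun s => a * s ^ 2 + b / s ^ 2) (2 * a * s - 2 * b / s ^ 3) s := by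
  refine (((hasDerivAt_pow 2 s).const_mul a).add
    ((hasDerivAt_const s b).div (hasDerivAt_pow 2 s) (pow_ne_zero 2 hs))).congr_deriv ?_
  field_simp
  ring

lemma abs_deriv_mul_sq_add_div_sq_mul_le {a b s : ℝ} (hab : 1 ≤ a * b) (hs : 0 < s) :
    |2 * a * s - 2 * b / s ^ 3| * s ≤ 2 * √((a * s ^ 2 + b / s ^ 2) ^ 2 - 4) := by
  have hprod : a * s ^ 2 * (b / s ^ 2) = a * b := by field_simp
  have hdiff : (2 * a * s - 2 * b / s ^ 3) * s = 2 * (a * s ^ 2 - b / s ^ 2) := by field_simp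
  calc |2 * a * s - 2 * b / s ^ 3| * s = |(2 * a * s - 2 * b / s ^ 3) * s| := by
        rw [abs_mul, abs_of_pos hs]
    _ = 2 * |a * s ^ 2 - b / s ^ 2| := by rw [hdiff, abs_mul, abs_two]
    _ ≤ 2 * √((a * s ^ 2 + b / s ^ 2) ^ 2 - 4) := by
        gcongr
        exact abs_le_sqrt (by nlinarith)

lemma exists_hasDerivAt_unimodularOpNorm_mul_sq_add_div_sq {a b s : ℝ} (hab : 1 ≤ a * b)
    (hs : 0 < s) (h : 1 < unimodularOpNorm (a * s ^ 2 + b / s ^ 2)) :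
    ∃ D, HasDerivAt (fun s => unimodularOpNorm (a * s ^ 2 + b / s ^ 2)) D s ∧
      |D| * (unimodularOpNorm (a * s ^ 2 + b / s ^ 2))⁻¹ ≤ 1 / s := by
  set t := a * s ^ 2 + b / s ^ 2
  have ht := two_lt_of_one_lt_unimodularOpNorm h
  have hu : 0 < 2 * √(t ^ 2 - 4) := by
    have : 0 < t ^ 2 - 4 := by nlinarith
    positivity
  have hD := (hasDerivAt_unimodularOpNorm ht).comp s (hasDerivAt_mul_sq_add_div_sq a b hs.ne')
  refine ⟨_, hD, ?_⟩
  have hσ : 0 < unimodularOpNorm t := by linarith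
  rw [abs_mul, abs_div, abs_of_pos hσ, abs_of_pos hu, le_div_iff₀ hs]
  calc unimodularOpNorm t / (2 * √(t ^ 2 - 4)) * |2 * a * s - 2 * b / s ^ 3| *
        (unimodularOpNorm t)⁻¹ * s
      = |2 * a * s - 2 * b / s ^ 3| * s / (2 * √(t ^ 2 - 4)) := by field_simp
    _ ≤ 1 := (div_le_one hu).mpr (abs_deriv_mul_sq_add_div_sq_mul_le hab hs)

lemma opNorm_eq_unimodularOpNorm {A : Matrix (Fin 2) (Fin 2) ℝ} (hA : A.det = 1) :
    opNorm A = unimodularOpNorm (A 0 0 ^ 2 + A 0 1 ^ 2 + A 1 0 ^ 2 + A 1 1 ^ 2) := by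
  rw [Matrix.det_fin_two] at hA
  rw [opNorm_eq_sqrt_largerEigenvalue, largerEigenvalue, unimodularOpNorm]
  have ht : A 0 0 ^ 2 + A 1 0 ^ 2 + (A 0 1 ^ 2 + A 1 1 ^ 2) =
      A 0 0 ^ 2 + A 0 1 ^ 2 + A 1 0 ^ 2 + A 1 1 ^ 2 := by ring
  have hdisc : (A 0 0 ^ 2 + A 1 0 ^ 2 - (A 0 1 ^ 2 + A 1 1 ^ 2)) ^ 2 +
      4 * (A 0 0 * A 0 1 + A 1 0 * A 1 1) ^ 2 =
      (A 0 0 ^ 2 + A 0 1 ^ 2 + A 1 0 ^ 2 + A 1 1 ^ 2) ^ 2 - 4 := by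
    linear_combination (-4 * (A 0 0 * A 1 1 - A 0 1 * A 1 0) - 4) * hA
  rw [ht, hdisc]

lemma opNorm_diag_mul {M : Matrix (Fin 2) (Fin 2) ℝ} (hM : M.det = 1) {s : ℝ} (hs : s ≠ 0) :
    opNorm (!![s, 0; 0, s⁻¹] * M) =
      unimodularOpNorm ((M 0 0 ^ 2 + M 0 1 ^ 2) * s ^ 2 + (M 1 0 ^ 2 + M 1 1 ^ 2) / s ^ 2) := by
  have hdet : (!![s, 0; 0, s⁻¹] * M).det = 1 := by
    rw [Matrix.det_mul, hM, Matrix.det_fin_two_of]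
    simp [hs]
  rw [opNorm_eq_unimodularOpNorm hdet]
  congr 1
  simp only [Matrix.mul_apply, Matrix.of_apply, Matrix.cons_val', Matrix.cons_val_fin_one,
    Matrix.cons_val_zero, Matrix.cons_val_one, Fin.sum_univ_two, zero_mul, add_zero, zero_add]
  field_simp
  ring

lemma one_le_mul_sum_sq_rows {M : Matrix (Fin 2) (Fin 2) ℝ} (hM : M.det = 1) :
    1 ≤ (M 0 0 ^ 2 + M 0 1 ^ 2) * (M 1 0 ^ 2 + M 1 1 ^ 2) := by
  rw [Matrix.det_fin_two] at hM
  nlinarith [sq_nonneg (M 0 0 * M 1 0 + M 0 1 * M 1 1)]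

lemma exists_hasDerivAt_opNorm_diag_mul {M : Matrix (Fin 2) (Fin 2) ℝ} (hM : M.det = 1) {l : ℝ}
    (hl : 0 < l) (h : 1 < opNorm (!![l, 0; 0, l⁻¹] * M)) :
    ∃ D : ℝ, HasDerivAt (fun s => opNorm (!![s, 0; 0, s⁻¹] * M)) D l ∧
      |D| * (opNorm (!![l, 0; 0, l⁻¹] * M))⁻¹ ≤ 1 / l := by
  rw [opNorm_diag_mul hM hl.ne'] at h ⊢
  obtain ⟨D, hD, hbound⟩ :=
    exists_hasDerivAt_unimodularOpNorm_mul_sq_add_div_sq (one_le_mul_sum_sq_rows hM) hl h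
  refine ⟨D, hD.congr_of_eventuallyEq ?_, hbound⟩
  filter_upwards [eventually_ne_nhds hl.ne'] with s hs using opNorm_diag_mul hM hs

lemma det_rotation_mul_diag (θ : ℝ) {l : ℝ} (hl : l ≠ 0) :
    (!![cos θ, -sin θ; sin θ, cos θ] * !![l, 0; 0, l⁻¹]).det = 1 := by
  rw [Matrix.det_mul, Matrix.det_fin_two_of, Matrix.det_fin_two_of]
  field_simp
  linear_combination cos_sq_add_sin_sq θ

lemma Amat_transpose (l1 l2 θ : ℝ) : (Amat l1 l2 θ)ᵀ = Amat l2 l1 (-θ) := by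
  ext i j
  fin_cases i <;> fin_cases j <;> simp [Amat] <;> ring

lemma opNorm_Amat_swap (l1 l2 θ : ℝ) : opNorm (Amat l1 l2 θ) = opNorm (Amat l2 l1 (-θ)) := by
  rw [← opNorm_transpose, Amat_transpose]

lemma exists_hasDerivAt_opNorm_Amat_left {l1 l2 θ : ℝ} (hl1 : 0 < l1) (hl2 : 0 < l2)
    (h : 1 < opNorm (Amat l1 l2 θ)) :
    ∃ D : ℝ, HasDerivAt (fun s => opNorm (Amat s l2 θ)) D l1 ∧
      |D| * (opNorm (Amat l1 l2 θ))⁻¹ ≤ 1 / l1 := by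
  simp only [Amat, Matrix.mul_assoc] at h ⊢
  exact exists_hasDerivAt_opNorm_diag_mul (det_rotation_mul_diag θ hl2.ne') hl1 h

/-- Bounds on the logarithmic partial derivatives of `‖A(λ₁,λ₂,θ)‖` with
respect to `λ₁` and `λ₂`. -/
theorem deriv_norm_in_lambda_bounds :
    (∀ l1 l2 θ : ℝ, 0 < l1 → 0 < l2 → 1 < opNorm (Amat l1 l2 θ) →
      ∃ D : ℝ, HasDerivAt (fun s => opNorm (Amat s l2 θ)) D l1 ∧
        |D| * (opNorm (Amat l1 l2 θ))⁻¹ ≤ 1 / l1) ∧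
    (∀ l1 l2 θ : ℝ, 0 < l1 → 0 < l2 → 1 < opNorm (Amat l1 l2 θ) →
      ∃ D : ℝ, HasDerivAt (fun s => opNorm (Amat l1 s θ)) D l2 ∧
        |D| * (opNorm (Amat l1 l2 θ))⁻¹ ≤ 1 / l2) := by
  refine ⟨fun l1 l2 θ => exists_hasDerivAt_opNorm_Amat_left, fun l1 l2 θ hl1 hl2 h => ?_⟩
  rw [opNorm_Amat_swap] at h
  rw [funext fun s => opNorm_Amat_swap l1 s θ, opNorm_Amat_swap]
  exact exists_hasDerivAt_opNorm_Amat_left hl2 hl1 h
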